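/- arXiv:1405.7585 — 2 statements merged into one kernel-verified Lean document; each statement's English description precedes it below -/
import Mathlib

section
/- Let d ≥ 1 and α ∈ (−d,0). There exists a constant c ≥ 1, depending only on d and α, such that for every x ∈ ℝ^d and every r > 0, c^{−1} r^d (‖x‖ + r)^α ≤ m_α(B_r(x)) ≤ c r^{α+d}. -/
open MeasureTheory Filter Topology

noncomputable section

set_option maxHeartbeats 2000000 in
/-- Let `d ≥ 1` and `α ∈ (−d,0)`. There exists `c ≥ 1`, depending only on `d` and `α`,
such that for every `x ∈ ℝ^d` and `r > 0`,
`c⁻¹ r^d (‖x‖ + r)^α ≤ m_α(B_r(x)) ≤ c r^{α+d}`, where `m_α = ‖y‖^α dy`. -/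
theorem muckenhoupt_ball_volume_bounds_neg
    (d : ℕ) (hd : 1 ≤ d) (α : ℝ) (hα0 : -(d : ℝ) < α) (hαd : α < 0) :
    ∃ c : ℝ, 1 ≤ c ∧ ∀ (x : EuclideanSpace ℝ (Fin d)) (r : ℝ), 0 < r →
      c⁻¹ * r ^ (d : ℝ) * (‖x‖ + r) ^ α ≤ (∫ y in Metric.ball x r, ‖y‖ ^ α) ∧
      (∫ y in Metric.ball x r, ‖y‖ ^ α) ≤ c * r ^ (α + d) := by
  haveI : NeZero d := ⟨by omega⟩
  have had : 0 < α + (d : ℝ) := by linarith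
  set v₁ : ENNReal := volume (Metric.ball (0 : EuclideanSpace ℝ (Fin d)) 1) with hv₁def
  have hv₁0 : v₁ ≠ 0 := (Metric.measure_ball_pos _ _ one_pos).ne'
  have hv₁top : v₁ ≠ ⊤ := measure_ball_lt_top.ne
  have hball : ∀ (z : EuclideanSpace ℝ (Fin d)) (s : ℝ), 0 ≤ s →
      volume (Metric.ball z s) = ENNReal.ofReal (s ^ (d : ℝ)) * v₁ := by
    intro z s hs
    rw [Measure.addHaar_ball volume z hs, Real.rpow_natCast, hv₁def, finrank_euclideanSpace_fin]
  set q : ENNReal := ENNReal.ofReal ((2 : ℝ) ^ (-(α + (d : ℝ)))) with hqdef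
  have hq1 : q < 1 := by
    rw [hqdef, ENNReal.ofReal_lt_one]
    exact Real.rpow_lt_one_of_one_lt_of_neg one_lt_two (by linarith)
  set K : ENNReal := ENNReal.ofReal ((2 : ℝ) ^ (-α)) * v₁ * (1 - q)⁻¹ with hKdef
  have hKtop : K ≠ ⊤ := by
    refine ENNReal.mul_ne_top (ENNReal.mul_ne_top ENNReal.ofReal_ne_top hv₁top) ?_
    exact ENNReal.inv_ne_top.mpr (tsub_pos_of_lt hq1).ne'
  -- key upper bound on centered balls
  have key : ∀ R : ℝ, 0 < R →
      (∫⁻ y in Metric.ball (0 : EuclideanSpace ℝ (Fin d)) R, ENNReal.ofReal (‖y‖ ^ α))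
        ≤ ENNReal.ofReal (R ^ (α + (d : ℝ))) * K := by
    intro R hR
    set A : ℕ → Set (EuclideanSpace ℝ (Fin d)) := fun n =>
      Metric.ball (0 : EuclideanSpace ℝ (Fin d)) (R / 2 ^ n) \ Metric.ball 0 (R / 2 ^ (n + 1))
      with hAdef
    have hsub : Metric.ball (0 : EuclideanSpace ℝ (Fin d)) R ⊆ {0} ∪ ⋃ n : ℕ, A n := by
      intro y hy
      rcases eq_or_ne y 0 with h0 | h0
      · exact Or.inl (by simp [h0])
      have hy0 : 0 < ‖y‖ := norm_pos_iff.mpr h0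
      have hyR : ‖y‖ < R := by simpa [mem_ball_zero_iff] using hy
      have hex : ∃ n : ℕ, R ≤ ‖y‖ * 2 ^ (n + 1) := by
        obtain ⟨n, hn⟩ := pow_unbounded_of_one_lt (R / ‖y‖) (one_lt_two (α := ℝ))
        rw [div_lt_iff₀ hy0] at hn
        refine ⟨n, ?_⟩
        have h2 : (0 : ℝ) < 2 ^ n := by positivity
        have : (2:ℝ) ^ n ≤ 2 ^ (n+1) := by
          rw [pow_succ]; nlinarith
        nlinarith
      refine Or.inr (Set.mem_iUnion.mpr ⟨Nat.find hex, ?_, ?_⟩)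
      · rw [mem_ball_zero_iff]
        rcases Nat.eq_zero_or_pos (Nat.find hex) with h | h
        · rw [h]; simpa using hyR
        · obtain ⟨m, hm⟩ := Nat.exists_eq_add_of_lt h
          have hmin := Nat.find_min hex (m := m) (by omega)
          push_neg at hmin
          have h2 : (0 : ℝ) < 2 ^ (Nat.find hex) := by positivity
          rw [lt_div_iff₀ h2]
          have : Nat.find hex = m + 1 := by omega
          rw [this]
          linarith [hmin]
      · intro hmem
        rw [mem_ball_zero_iff] at hmem
        have hspec := Nat.find_spec hex
        have h2 : (0 : ℝ) < 2 ^ (Nat.find hex + 1) := by positivity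
        rw [lt_div_iff₀ h2] at hmem
        linarith
    have hA : ∀ n : ℕ, (∫⁻ y in A n, ENNReal.ofReal (‖y‖ ^ α))
        ≤ ENNReal.ofReal ((R / 2 ^ (n + 1)) ^ α) * (ENNReal.ofReal ((R / 2 ^ n) ^ (d : ℝ)) * v₁) := by
      intro n
      have hbnd : ∀ y ∈ A n, ENNReal.ofReal (‖y‖ ^ α) ≤ ENNReal.ofReal ((R / 2 ^ (n + 1)) ^ α) := by
        intro y hy
        have h1 : R / 2 ^ (n + 1) ≤ ‖y‖ := by
          have := hy.2
          rw [mem_ball_zero_iff] at this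
          exact not_lt.mp this
        have hpos : (0 : ℝ) < R / 2 ^ (n + 1) := by positivity
        exact ENNReal.ofReal_le_ofReal (Real.rpow_le_rpow_of_nonpos hpos h1 hαd.le)
      calc (∫⁻ y in A n, ENNReal.ofReal (‖y‖ ^ α))
          ≤ ∫⁻ _ in A n, ENNReal.ofReal ((R / 2 ^ (n + 1)) ^ α) :=
            setLIntegral_mono measurable_const hbnd
        _ = ENNReal.ofReal ((R / 2 ^ (n + 1)) ^ α) * volume (A n) := setLIntegral_const _ _
        _ ≤ ENNReal.ofReal ((R / 2 ^ (n + 1)) ^ α) * volume (Metric.ball (0 : EuclideanSpace ℝ (Fin d)) (R / 2 ^ n)) :=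
            mul_le_mul_right (measure_mono Set.diff_subset) _
        _ = _ := by rw [hball _ _ (by positivity)]
    have hreal : ∀ n : ℕ, (R / 2 ^ (n + 1)) ^ α * (R / 2 ^ n) ^ (d : ℝ)
        = R ^ (α + (d : ℝ)) * ((2 : ℝ) ^ (-α) * ((2 : ℝ) ^ (-(α + (d : ℝ)))) ^ n) := by
      intro n
      have h2 : (0 : ℝ) < 2 := by norm_num
      rw [Real.div_rpow hR.le (by positivity), Real.div_rpow hR.le (by positivity),
        ← Real.rpow_natCast (2 : ℝ) (n + 1), ← Real.rpow_natCast (2 : ℝ) n,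
        ← Real.rpow_natCast ((2 : ℝ) ^ (-(α + (d : ℝ)))) n,
        ← Real.rpow_mul h2.le, ← Real.rpow_mul h2.le, ← Real.rpow_mul h2.le,
        div_mul_div_comm, ← Real.rpow_add hR, ← Real.rpow_add h2,
        ← Real.rpow_add h2, div_eq_mul_inv, ← Real.rpow_neg h2.le]
      push_cast
      ring_nf
    calc (∫⁻ y in Metric.ball (0 : EuclideanSpace ℝ (Fin d)) R, ENNReal.ofReal (‖y‖ ^ α))
        ≤ ∫⁻ y in ({0} ∪ ⋃ n : ℕ, A n), ENNReal.ofReal (‖y‖ ^ α) := lintegral_mono_set hsub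
      _ ≤ (∫⁻ y in ({0} : Set (EuclideanSpace ℝ (Fin d))), ENNReal.ofReal (‖y‖ ^ α))
          + ∫⁻ y in ⋃ n : ℕ, A n, ENNReal.ofReal (‖y‖ ^ α) := lintegral_union_le _ _ _
      _ = ∫⁻ y in ⋃ n : ℕ, A n, ENNReal.ofReal (‖y‖ ^ α) := by
          rw [setLIntegral_measure_zero _ _ (measure_singleton _), zero_add]
      _ ≤ ∑' n, ∫⁻ y in A n, ENNReal.ofReal (‖y‖ ^ α) := lintegral_iUnion_le _ _
      _ ≤ ∑' n, ENNReal.ofReal ((R / 2 ^ (n + 1)) ^ α) * (ENNReal.ofReal ((R / 2 ^ n) ^ (d : ℝ)) * v₁) :=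
          ENNReal.tsum_le_tsum hA
      _ = ∑' n, ENNReal.ofReal (R ^ (α + (d : ℝ))) * ENNReal.ofReal ((2 : ℝ) ^ (-α)) * v₁ * q ^ n := by
          refine tsum_congr fun n => ?_
          rw [← mul_assoc, ← ENNReal.ofReal_mul (by positivity), hreal n,
            hqdef, ← ENNReal.ofReal_pow (by positivity),
            ENNReal.ofReal_mul (by positivity), ENNReal.ofReal_mul (by positivity)]
          ring
      _ = ENNReal.ofReal (R ^ (α + (d : ℝ))) * K := by
          rw [ENNReal.tsum_mul_left, ENNReal.tsum_geometric, hKdef]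
          ring
  -- measurability
  have hmeas : Measurable fun y : EuclideanSpace ℝ (Fin d) => ENNReal.ofReal (‖y‖ ^ α) :=
    ((measurable_id'.pow_const α).comp measurable_norm).ennreal_ofReal
  set W : ENNReal := max (ENNReal.ofReal ((3 : ℝ) ^ (α + (d : ℝ))) * K) v₁ with hWdef
  have hWtop : W ≠ ⊤ := by
    rw [hWdef]
    simp only [ne_eq, max_eq_top, not_or]
    exact ⟨ENNReal.mul_ne_top ENNReal.ofReal_ne_top hKtop, hv₁top⟩
  refine ⟨max 1 (max (v₁.toReal)⁻¹ W.toReal), le_max_left _ _, fun x r hr => ?_⟩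
  set c := max 1 (max (v₁.toReal)⁻¹ W.toReal) with hcdef
  have hc1 : (1:ℝ) ≤ c := le_max_left _ _
  have hint : (∫ y in Metric.ball x r, ‖y‖ ^ α)
      = (∫⁻ y in Metric.ball x r, ENNReal.ofReal (‖y‖ ^ α)).toReal := by
    rw [integral_eq_lintegral_of_nonneg_ae (ae_of_all _ fun y => Real.rpow_nonneg (norm_nonneg y) α)
      ((measurable_id'.pow_const α).comp measurable_norm).aestronglyMeasurable.restrict]
  set L : ENNReal := ∫⁻ y in Metric.ball x r, ENNReal.ofReal (‖y‖ ^ α) with hLdef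
  have hup : L ≤ ENNReal.ofReal (r ^ (α + (d : ℝ))) * W := by
    rcases le_or_gt ‖x‖ (2 * r) with hx | hx
    · have hsub : Metric.ball x r ⊆ Metric.ball (0 : EuclideanSpace ℝ (Fin d)) (3 * r) :=
        Metric.ball_subset_ball' (by rw [dist_zero_right]; linarith)
      calc L ≤ ∫⁻ y in Metric.ball (0 : EuclideanSpace ℝ (Fin d)) (3 * r), ENNReal.ofReal (‖y‖ ^ α) :=
            lintegral_mono_set hsub
        _ ≤ ENNReal.ofReal ((3 * r) ^ (α + (d : ℝ))) * K := key _ (by linarith)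
        _ = ENNReal.ofReal (r ^ (α + (d : ℝ))) * (ENNReal.ofReal ((3:ℝ) ^ (α + (d : ℝ))) * K) := by
            rw [Real.mul_rpow (by norm_num) hr.le, ENNReal.ofReal_mul (by positivity)]
            ring
        _ ≤ ENNReal.ofReal (r ^ (α + (d : ℝ))) * W := mul_le_mul_right (le_max_left _ _) _
    · have hbnd : ∀ y ∈ Metric.ball x r, ENNReal.ofReal (‖y‖ ^ α) ≤ ENNReal.ofReal (r ^ α) := by
        intro y hy
        have hdy : dist x y < r := by rw [dist_comm]; exact Metric.mem_ball.mp hy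
        have h1 : r ≤ ‖y‖ := by
          have h2 : ‖x‖ ≤ dist x y + ‖y‖ := by
            simpa [dist_zero_right] using dist_triangle x y 0
          linarith
        exact ENNReal.ofReal_le_ofReal (Real.rpow_le_rpow_of_nonpos hr h1 hαd.le)
      calc L ≤ ∫⁻ _ in Metric.ball x r, ENNReal.ofReal (r ^ α) :=
            setLIntegral_mono measurable_const hbnd
        _ = ENNReal.ofReal (r ^ α) * volume (Metric.ball x r) := setLIntegral_const _ _
        _ = ENNReal.ofReal (r ^ (α + (d : ℝ))) * v₁ := by
            rw [hball _ _ hr.le, ← mul_assoc, ← ENNReal.ofReal_mul (by positivity),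
              ← Real.rpow_add hr]
        _ ≤ ENNReal.ofReal (r ^ (α + (d : ℝ))) * W := mul_le_mul_right (le_max_right _ _) _
  have hLtop : L ≠ ⊤ :=
    (hup.trans_lt (ENNReal.mul_lt_top ENNReal.ofReal_lt_top hWtop.lt_top)).ne
  constructor
  · -- lower bound
    have h0ae : ∀ᵐ y : EuclideanSpace ℝ (Fin d) ∂volume, y ≠ 0 := by
      rw [ae_iff]
      simpa using measure_singleton (0 : EuclideanSpace ℝ (Fin d))
    have hae : ∀ᵐ y ∂(volume.restrict (Metric.ball x r)),
        ENNReal.ofReal ((‖x‖ + r) ^ α) ≤ ENNReal.ofReal (‖y‖ ^ α) := by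
      filter_upwards [ae_restrict_mem measurableSet_ball, ae_restrict_of_ae h0ae] with y hy hy0
      refine ENNReal.ofReal_le_ofReal ?_
      refine Real.rpow_le_rpow_of_nonpos (norm_pos_iff.mpr hy0) ?_ hαd.le
      have hdy : dist y x < r := Metric.mem_ball.mp hy
      have : ‖y‖ ≤ dist y x + ‖x‖ := by
        simpa [dist_zero_right] using dist_triangle y x 0
      linarith
    have hlow : ENNReal.ofReal ((‖x‖ + r) ^ α * r ^ (d : ℝ)) * v₁ ≤ L := by
      calc ENNReal.ofReal ((‖x‖ + r) ^ α * r ^ (d : ℝ)) * v₁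
          = ENNReal.ofReal ((‖x‖ + r) ^ α) * volume (Metric.ball x r) := by
            rw [hball _ _ hr.le, ENNReal.ofReal_mul (by positivity), mul_assoc]
        _ = ∫⁻ _ in Metric.ball x r, ENNReal.ofReal ((‖x‖ + r) ^ α) := (setLIntegral_const _ _).symm
        _ ≤ L := lintegral_mono_ae hae
    have hmono := ENNReal.toReal_mono hLtop hlow
    rw [ENNReal.toReal_mul, ENNReal.toReal_ofReal (by positivity)] at hmono
    rw [hint]
    refine le_trans ?_ hmono
    have hv : 0 < v₁.toReal := ENNReal.toReal_pos hv₁0 hv₁top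
    have hcinv : c⁻¹ ≤ v₁.toReal := by
      have h1 : (v₁.toReal)⁻¹ ≤ c := le_trans (le_max_left _ _) (le_max_right _ _)
      calc c⁻¹ ≤ ((v₁.toReal)⁻¹)⁻¹ := by
            apply inv_anti₀ (by positivity) h1
        _ = v₁.toReal := inv_inv _
    have hpos : 0 ≤ r ^ (d : ℝ) * (‖x‖ + r) ^ α := by positivity
    calc c⁻¹ * r ^ (d : ℝ) * (‖x‖ + r) ^ α = c⁻¹ * (r ^ (d : ℝ) * (‖x‖ + r) ^ α) := by ring
      _ ≤ v₁.toReal * (r ^ (d : ℝ) * (‖x‖ + r) ^ α) := mul_le_mul_of_nonneg_right hcinv hpos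
      _ = (‖x‖ + r) ^ α * r ^ (d : ℝ) * v₁.toReal := by ring
  · -- upper bound
    rw [hint]
    have h1 : L.toReal ≤ r ^ (α + (d : ℝ)) * W.toReal := by
      have := ENNReal.toReal_mono (ENNReal.mul_ne_top ENNReal.ofReal_ne_top hWtop) hup
      rwa [ENNReal.toReal_mul, ENNReal.toReal_ofReal (by positivity)] at this
    have h2 : W.toReal ≤ c := le_trans (le_max_right _ _) (le_max_right _ _)
    have hrp : 0 ≤ r ^ (α + (d : ℝ)) := Real.rpow_nonneg hr.le _
    calc L.toReal ≤ r ^ (α + (d : ℝ)) * W.toReal := h1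
      _ ≤ r ^ (α + (d : ℝ)) * c := mul_le_mul_of_nonneg_left h2 hrp
      _ = c * r ^ (α + (d : ℝ)) := by ring
end
end

section
/- Let d ≥ 3 and let ρ : ℝ^d → ℝ be Borel measurable with κ^{−1} ≤ ρ(x) ≤ κ for all x ∈ ℝ^d, for some κ ≥ 1. Then there exists a constant C > 0, depending only on d and κ, such that for every smooth compactly supported function f : ℝ^d → ℝ, ( ∫_{ℝ^d} f² ρ dx )^{1 + 2/d} ≤ C · ( (1/2) ∫_{ℝ^d} ‖∇f‖² ρ dx + ∫_{ℝ^d} f² ρ dx ) · ( ∫_{ℝ^d} |f| ρ dx )^{4/d} (a Nash type inequality). -/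
open MeasureTheory Filter Topology Module ENNReal NNReal

noncomputable section

-- Unweighted Nash core
lemma nash_core (d : ℕ) (hd : 3 ≤ d)
    (f : EuclideanSpace ℝ (Fin d) → ℝ) (hf : ContDiff ℝ (⊤ : ℕ∞) f) (h2f : HasCompactSupport f) :
    ∃ C₀ : ℝ≥0, C₀ = eLpNormLESNormFDerivOfEqInnerConst
        (volume : Measure (EuclideanSpace ℝ (Fin d))) 2 ∧
    (∫ x, f x ^ 2) ^ (1 + 2 / (d : ℝ)) ≤
      (C₀ : ℝ) ^ 2 * (∫ x, ‖fderiv ℝ f x‖ ^ 2) * (∫ x, |f x|) ^ (4 / (d : ℝ)) := by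
  set D : ℝ := (d : ℝ) with hDdef
  have hD3 : (3 : ℝ) ≤ D := by rw [hDdef]; exact_mod_cast hd
  have hD0 : (0 : ℝ) < D := by linarith
  have hD2 : (0 : ℝ) < D - 2 := by linarith
  have hcont := hf.continuous
  have hfd_cont : Continuous (fderiv ℝ f) := hf.continuous_fderiv (by simp)
  have hfd_supp : HasCompactSupport (fderiv ℝ f) := h2f.fderiv (𝕜 := ℝ)
  -- integrability
  have intJ2 : Integrable (fun x => f x ^ 2) :=
    (hcont.pow 2).integrable_of_hasCompactSupport
      (h2f.comp_left (g := fun t : ℝ => t ^ 2) (by simp) : HasCompactSupport (fun x => f x ^ 2))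
  have intJ1 : Integrable (fun x => |f x|) :=
    hcont.abs.integrable_of_hasCompactSupport
      (h2f.comp_left (g := fun t : ℝ => |t|) (by simp) : HasCompactSupport (fun x => |f x|))
  have intJG : Integrable (fun x => ‖fderiv ℝ f x‖ ^ 2) :=
    (hfd_cont.norm.pow 2).integrable_of_hasCompactSupport
      (hfd_supp.comp_left (g := fun L => ‖L‖ ^ 2) (by simp) : HasCompactSupport (fun x => ‖fderiv ℝ f x‖ ^ 2))
  have hJ2_0 : 0 ≤ ∫ x, f x ^ 2 := integral_nonneg fun x => sq_nonneg _
  have hJ1_0 : 0 ≤ ∫ x, |f x| := integral_nonneg fun x => abs_nonneg _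
  have hJG_0 : 0 ≤ ∫ x, ‖fderiv ℝ f x‖ ^ 2 := integral_nonneg fun x => sq_nonneg _
  -- real to ENNReal conversions
  have hof2 : ENNReal.ofReal (∫ x, f x ^ 2) = ∫⁻ x, (‖f x‖₊ : ℝ≥0∞) ^ (2 : ℝ) := by
    rw [ofReal_integral_eq_lintegral_ofReal intJ2
      (Filter.Eventually.of_forall fun x => sq_nonneg _)]
    refine lintegral_congr fun x => ?_
    rw [show f x ^ 2 = |f x| ^ 2 from (sq_abs _).symm, ENNReal.ofReal_pow (abs_nonneg _),
      ← Real.enorm_eq_ofReal_abs, enorm_eq_nnnorm, ← ENNReal.rpow_natCast]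
    norm_num
  have hof1 : ENNReal.ofReal (∫ x, |f x|) = ∫⁻ x, (‖f x‖₊ : ℝ≥0∞) := by
    rw [ofReal_integral_eq_lintegral_ofReal intJ1
      (Filter.Eventually.of_forall fun x => abs_nonneg _)]
    exact lintegral_congr fun x => (Real.enorm_eq_ofReal_abs _).symm
  have hofG : ENNReal.ofReal (∫ x, ‖fderiv ℝ f x‖ ^ 2)
      = ∫⁻ x, (‖fderiv ℝ f x‖₊ : ℝ≥0∞) ^ (2 : ℝ) := by
    rw [ofReal_integral_eq_lintegral_ofReal intJG
      (Filter.Eventually.of_forall fun x => sq_nonneg _)]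
    refine lintegral_congr fun x => ?_
    rw [ENNReal.ofReal_pow (norm_nonneg _), ofReal_norm_eq_enorm, enorm_eq_nnnorm, ← ENNReal.rpow_natCast]
    norm_num
  -- Sobolev inequality
  have hfinrank : finrank ℝ (EuclideanSpace ℝ (Fin d)) = d := finrank_euclideanSpace_fin
  set pR : ℝ := 2 * D / (D - 2) with hpRdef
  have hpR0 : 0 < pR := by positivity
  set p' : ℝ≥0 := Real.toNNReal pR with hp'def
  have hp'c : (p' : ℝ) = pR := Real.coe_toNNReal _ hpR0.le
  have hp'0 : p' ≠ 0 := by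
    simp only [hp'def, ne_eq, Real.toNNReal_eq_zero, not_le]
    exact hpR0
  have hD0' : D ≠ 0 := hD0.ne'
  have hD2' : D - 2 ≠ 0 := hD2.ne'
  have sob : eLpNorm f p' volume ≤
      (eLpNormLESNormFDerivOfEqInnerConst (volume : Measure (EuclideanSpace ℝ (Fin d))) 2 : ℝ≥0∞)
        * eLpNorm (fderiv ℝ f) 2 volume := by
    refine eLpNorm_le_eLpNorm_fderiv_of_eq_inner volume (hf.of_le (by simp)) h2f
      (p := 2) (by norm_num) (by rw [hfinrank]; omega) ?_
    rw [hp'c, hfinrank, hpRdef]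
    push_cast
    rw [← hDdef]
    field_simp
    try ring
  -- Hölder / interpolation
  set φ : EuclideanSpace ℝ (Fin d) → ℝ≥0∞ := fun x => (‖f x‖₊ : ℝ≥0∞) with hφdef
  have hmφ : Measurable φ := hcont.measurable.nnnorm.coe_nnreal_ennreal
  set A : ℝ≥0∞ := ∫⁻ x, φ x ^ (2 : ℝ) with hAdef
  set B : ℝ≥0∞ := ∫⁻ x, φ x with hBdef
  set Gq : ℝ≥0∞ := ∫⁻ x, (‖fderiv ℝ f x‖₊ : ℝ≥0∞) ^ (2 : ℝ) with hGqdef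
  set T : ℝ≥0∞ := ∫⁻ x, φ x ^ pR with hTdef
  have hconj : Real.HolderConjugate ((D + 2) / 4) ((D + 2) / (D - 2)) := by
    rw [Real.holderConjugate_iff]
    constructor
    · rw [one_lt_div (by norm_num : (0:ℝ) < 4)]; linarith
    · rw [inv_div, inv_div]
      field_simp
      try ring
  have holder := ENNReal.lintegral_mul_le_Lp_mul_Lq volume hconj
    (f := fun x => φ x ^ (4 / (D + 2))) (g := fun x => φ x ^ (2 * D / (D + 2)))
    (hmφ.pow_const _).aemeasurable (hmφ.pow_const _).aemeasurable
  have h1 : A ≤ B ^ (4 / (D + 2)) * T ^ ((D - 2) / (D + 2)) := by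
    calc A = ∫⁻ x, φ x ^ (4 / (D + 2)) * φ x ^ (2 * D / (D + 2)) := by
          refine lintegral_congr fun x => ?_
          rw [← ENNReal.rpow_add_of_nonneg _ _ (by positivity) (by positivity)]
          congr 1
          field_simp
          try ring
      _ ≤ (∫⁻ x, (φ x ^ (4 / (D + 2))) ^ ((D + 2) / 4)) ^ (1 / ((D + 2) / 4)) *
          (∫⁻ x, (φ x ^ (2 * D / (D + 2))) ^ ((D + 2) / (D - 2))) ^ (1 / ((D + 2) / (D - 2))) :=
          holder
      _ = B ^ (4 / (D + 2)) * T ^ ((D - 2) / (D + 2)) := by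
          rw [one_div_div, one_div_div]
          congr 1
          · congr 1
            refine lintegral_congr fun x => ?_
            rw [← ENNReal.rpow_mul, show (4 / (D + 2)) * ((D + 2) / 4) = 1 by field_simp,
              ENNReal.rpow_one]
          · congr 1
            refine lintegral_congr fun x => ?_
            rw [← ENNReal.rpow_mul]
            congr 1
            rw [hpRdef]
            field_simp
            try ring
  -- rewrite Sobolev in lintegral form
  have hS : eLpNorm f p' volume = T ^ (1 / pR) := by
    rw [eLpNorm_nnreal_eq_lintegral hp'0, hp'c]; rfl
  have hD2n : eLpNorm (fderiv ℝ f) 2 volume = Gq ^ (1 / (2 : ℝ)) := by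
    rw [eLpNorm_eq_lintegral_rpow_enorm_toReal (by norm_num) (by norm_num)]
    simp only [ENNReal.toReal_ofNat]; rfl
  set C₀ : ℝ≥0 :=
    eLpNormLESNormFDerivOfEqInnerConst (volume : Measure (EuclideanSpace ℝ (Fin d))) 2 with hC₀def
  have sob' : T ^ (1 / pR) ≤ (C₀ : ℝ≥0∞) * Gq ^ (1 / (2 : ℝ)) := by
    rw [← hS, ← hD2n]; exact sob
  have h2 : T ^ ((D - 2) / (D + 2)) ≤ ((C₀ : ℝ≥0∞) * Gq ^ (1 / (2 : ℝ))) ^ (2 * D / (D + 2)) := by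
    have : T ^ ((D - 2) / (D + 2)) = (T ^ (1 / pR)) ^ (2 * D / (D + 2)) := by
      rw [← ENNReal.rpow_mul]
      congr 1
      rw [hpRdef]
      field_simp
      try ring
    rw [this]
    exact ENNReal.rpow_le_rpow sob' (by positivity)
  have h3 : A ^ (1 + 2 / D) ≤ B ^ (4 / D) * ((C₀ : ℝ≥0∞) ^ (2 : ℝ) * Gq) := by
    calc A ^ (1 + 2 / D)
        ≤ (B ^ (4 / (D + 2)) * ((C₀ : ℝ≥0∞) * Gq ^ (1 / (2 : ℝ))) ^ (2 * D / (D + 2)))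
            ^ (1 + 2 / D) :=
          ENNReal.rpow_le_rpow (h1.trans (mul_le_mul_right h2 _)) (by positivity)
      _ = B ^ (4 / D) * (((C₀ : ℝ≥0∞) * Gq ^ (1 / (2 : ℝ))) ^ (2 : ℝ)) := by
          rw [ENNReal.mul_rpow_of_nonneg _ _ (by positivity), ← ENNReal.rpow_mul,
            ← ENNReal.rpow_mul,
            show (4 / (D + 2)) * (1 + 2 / D) = 4 / D by field_simp; try ring,
            show (2 * D / (D + 2)) * (1 + 2 / D) = 2 by field_simp; try ring]
      _ = B ^ (4 / D) * ((C₀ : ℝ≥0∞) ^ (2 : ℝ) * Gq) := by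
          rw [ENNReal.mul_rpow_of_nonneg _ _ (by norm_num), ← ENNReal.rpow_mul]
          norm_num
  refine ⟨C₀, hC₀def, ?_⟩
  have hofC : (C₀ : ℝ≥0∞) ^ (2 : ℝ) = ENNReal.ofReal ((C₀ : ℝ) ^ 2) := by
    rw [show ((2:ℝ)) = ((2:ℕ):ℝ) by norm_num, ENNReal.rpow_natCast, ← ENNReal.coe_pow,
      ENNReal.ofReal_pow (by positivity)]
    simp
  have key := h3
  rw [← hof2, ← hof1, ← hofG, hofC,
    ENNReal.ofReal_rpow_of_nonneg hJ2_0 (by positivity),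
    ENNReal.ofReal_rpow_of_nonneg hJ1_0 (by positivity),
    ← ENNReal.ofReal_mul (by positivity),
    ← ENNReal.ofReal_mul (by positivity)] at key
  have hre := (ENNReal.ofReal_le_ofReal_iff (by positivity)).mp key
  calc (∫ x, f x ^ 2) ^ (1 + 2 / D)
      ≤ (∫ x, |f x|) ^ (4 / D) * ((C₀:ℝ) ^ 2 * ∫ x, ‖fderiv ℝ f x‖ ^ 2) := hre
    _ = (C₀ : ℝ) ^ 2 * (∫ x, ‖fderiv ℝ f x‖ ^ 2) * (∫ x, |f x|) ^ (4 / D) := by ring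


/-- Nash type inequality: let `d ≥ 3` and `ρ : ℝ^d → ℝ` Borel measurable with
`κ⁻¹ ≤ ρ ≤ κ` for some `κ ≥ 1`. Then there exists `C > 0`, depending only on `d` and
`κ`, such that for every smooth compactly supported `f : ℝ^d → ℝ`,
`(∫ f² ρ dx)^{1+2/d} ≤ C ((1/2)∫ ‖∇f‖² ρ dx + ∫ f² ρ dx) (∫ |f| ρ dx)^{4/d}`. -/
theorem nash_type_inequality
    (d : ℕ) (hd : 3 ≤ d) (ρ : EuclideanSpace ℝ (Fin d) → ℝ) (hρm : Measurable ρ)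
    (κ : ℝ) (hκ : 1 ≤ κ) (hρl : ∀ x, κ⁻¹ ≤ ρ x) (hρu : ∀ x, ρ x ≤ κ) :
    ∃ C : ℝ, 0 < C ∧ ∀ f : EuclideanSpace ℝ (Fin d) → ℝ,
      ContDiff ℝ (⊤ : ℕ∞) f → HasCompactSupport f →
      (∫ x, (f x) ^ 2 * ρ x) ^ (1 + 2 / (d : ℝ)) ≤
        C * ((1 / 2) * (∫ x, ‖fderiv ℝ f x‖ ^ 2 * ρ x) + ∫ x, (f x) ^ 2 * ρ x) *
          (∫ x, |f x| * ρ x) ^ (4 / (d : ℝ)) := by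
  have hκ0 : (0 : ℝ) < κ := lt_of_lt_of_le one_pos hκ
  have hρ0 : ∀ x, 0 ≤ ρ x := fun x => le_trans (by positivity) (hρl x)
  have hκκ : κ * κ⁻¹ = 1 := mul_inv_cancel₀ hκ0.ne'
  set D : ℝ := (d : ℝ) with hDdef
  have hD3 : (3 : ℝ) ≤ D := by rw [hDdef]; exact_mod_cast hd
  have hD0 : (0 : ℝ) < D := by linarith
  set c₀ : ℝ := ((eLpNormLESNormFDerivOfEqInnerConst
      (volume : Measure (EuclideanSpace ℝ (Fin d))) 2 : ℝ≥0) : ℝ) with hc₀def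
  have hc₀0 : 0 ≤ c₀ := NNReal.coe_nonneg _
  refine ⟨2 * (c₀ ^ 2 + 1) * κ ^ (2 + 6 / D), by positivity, ?_⟩
  intro f hf h2f
  obtain ⟨C₀, hC₀eq, hcore⟩ := nash_core d hd f hf h2f
  have hC₀c : (C₀ : ℝ) = c₀ := by rw [hC₀eq, hc₀def]
  rw [hC₀c] at hcore
  -- integrability (unweighted)
  have hcont := hf.continuous
  have hfd_cont : Continuous (fderiv ℝ f) := hf.continuous_fderiv (by simp)
  have hfd_supp : HasCompactSupport (fderiv ℝ f) := h2f.fderiv (𝕜 := ℝ)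
  have intJ2 : Integrable (fun x => f x ^ 2) :=
    (hcont.pow 2).integrable_of_hasCompactSupport
      (h2f.comp_left (g := fun t : ℝ => t ^ 2) (by simp) : HasCompactSupport (fun x => f x ^ 2))
  have intJ1 : Integrable (fun x => |f x|) :=
    hcont.abs.integrable_of_hasCompactSupport
      (h2f.comp_left (g := fun t : ℝ => |t|) (by simp) : HasCompactSupport (fun x => |f x|))
  have intJG : Integrable (fun x => ‖fderiv ℝ f x‖ ^ 2) :=
    (hfd_cont.norm.pow 2).integrable_of_hasCompactSupport
      (hfd_supp.comp_left (g := fun L => ‖L‖ ^ 2) (by simp) : HasCompactSupport (fun x => ‖fderiv ℝ f x‖ ^ 2))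
  have hρb : ∃ Cb, ∀ x, ‖ρ x‖ ≤ Cb :=
    ⟨κ, fun x => by rw [Real.norm_eq_abs, abs_of_nonneg (hρ0 x)]; exact hρu x⟩
  -- weighted integrability
  have int2ρ : Integrable (fun x => f x ^ 2 * ρ x) :=
    (intJ2.bdd_mul hρm.aestronglyMeasurable (ae_of_all _ hρb.choose_spec)).congr
      (Filter.Eventually.of_forall fun x => mul_comm _ _)
  have int1ρ : Integrable (fun x => |f x| * ρ x) :=
    (intJ1.bdd_mul hρm.aestronglyMeasurable (ae_of_all _ hρb.choose_spec)).congr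
      (Filter.Eventually.of_forall fun x => mul_comm _ _)
  have intGρ : Integrable (fun x => ‖fderiv ℝ f x‖ ^ 2 * ρ x) :=
    (intJG.bdd_mul hρm.aestronglyMeasurable (ae_of_all _ hρb.choose_spec)).congr
      (Filter.Eventually.of_forall fun x => mul_comm _ _)
  -- nonnegativity
  have hI2_0 : 0 ≤ ∫ x, f x ^ 2 * ρ x :=
    integral_nonneg fun x => mul_nonneg (sq_nonneg _) (hρ0 x)
  have hI1_0 : 0 ≤ ∫ x, |f x| * ρ x :=
    integral_nonneg fun x => mul_nonneg (abs_nonneg _) (hρ0 x)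
  have hIG_0 : 0 ≤ ∫ x, ‖fderiv ℝ f x‖ ^ 2 * ρ x :=
    integral_nonneg fun x => mul_nonneg (sq_nonneg _) (hρ0 x)
  have hJ2_0 : 0 ≤ ∫ x, f x ^ 2 := integral_nonneg fun x => sq_nonneg _
  have hJ1_0 : 0 ≤ ∫ x, |f x| := integral_nonneg fun x => abs_nonneg _
  have hJG_0 : 0 ≤ ∫ x, ‖fderiv ℝ f x‖ ^ 2 := integral_nonneg fun x => sq_nonneg _
  -- comparisons
  have hI2_le : (∫ x, f x ^ 2 * ρ x) ≤ κ * ∫ x, f x ^ 2 := by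
    rw [← integral_const_mul]
    exact integral_mono int2ρ (intJ2.const_mul κ)
      fun x => by nlinarith [sq_nonneg (f x), hρu x]
  have hJG_le : (∫ x, ‖fderiv ℝ f x‖ ^ 2) ≤ κ * ∫ x, ‖fderiv ℝ f x‖ ^ 2 * ρ x := by
    rw [← integral_const_mul]
    refine integral_mono intJG (intGρ.const_mul κ) fun x => ?_
    have h1 : ‖fderiv ℝ f x‖ ^ 2 * κ⁻¹ ≤ ‖fderiv ℝ f x‖ ^ 2 * ρ x :=
      mul_le_mul_of_nonneg_left (hρl x) (sq_nonneg _)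
    calc ‖fderiv ℝ f x‖ ^ 2 = κ * (‖fderiv ℝ f x‖ ^ 2 * κ⁻¹) := by
          field_simp
      _ ≤ κ * (‖fderiv ℝ f x‖ ^ 2 * ρ x) := mul_le_mul_of_nonneg_left h1 hκ0.le
  have hJ1_le : (∫ x, |f x|) ≤ κ * ∫ x, |f x| * ρ x := by
    rw [← integral_const_mul]
    refine integral_mono intJ1 (int1ρ.const_mul κ) fun x => ?_
    have h1 : |f x| * κ⁻¹ ≤ |f x| * ρ x :=
      mul_le_mul_of_nonneg_left (hρl x) (abs_nonneg _)
    calc |f x| = κ * (|f x| * κ⁻¹) := by field_simp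
      _ ≤ κ * (|f x| * ρ x) := mul_le_mul_of_nonneg_left h1 hκ0.le
  -- exponent arithmetic on κ
  have hκpow : κ ^ ((2 : ℝ) + 6 / D) = κ ^ ((1 : ℝ) + 2 / D) * κ * κ ^ ((4 : ℝ) / D) := by
    rw [show (2 : ℝ) + 6 / D = ((1 : ℝ) + 2 / D) + 1 + 4 / D by ring,
      Real.rpow_add hκ0, Real.rpow_add hκ0, Real.rpow_one]
  -- assemble
  have s4 : (∫ x, f x ^ 2 * ρ x) ^ (1 + 2 / D) ≤ κ ^ (1 + 2 / D) * (∫ x, f x ^ 2) ^ (1 + 2 / D) := by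
    rw [← Real.mul_rpow hκ0.le hJ2_0]
    exact Real.rpow_le_rpow hI2_0 hI2_le (by positivity)
  have s2 : (∫ x, |f x|) ^ (4 / D) ≤ κ ^ (4 / D) * (∫ x, |f x| * ρ x) ^ (4 / D) := by
    rw [← Real.mul_rpow hκ0.le hI1_0]
    exact Real.rpow_le_rpow hJ1_0 hJ1_le (by positivity)
  calc (∫ x, f x ^ 2 * ρ x) ^ (1 + 2 / D)
      ≤ κ ^ (1 + 2 / D) * (∫ x, f x ^ 2) ^ (1 + 2 / D) := s4
    _ ≤ κ ^ (1 + 2 / D) * (c₀ ^ 2 * (∫ x, ‖fderiv ℝ f x‖ ^ 2) * (∫ x, |f x|) ^ (4 / D)) := by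
        have hk : 0 ≤ κ ^ ((1:ℝ) + 2 / D) := by positivity
        exact mul_le_mul_of_nonneg_left hcore hk
    _ ≤ κ ^ (1 + 2 / D) * (c₀ ^ 2 * (κ * ∫ x, ‖fderiv ℝ f x‖ ^ 2 * ρ x) *
          (κ ^ (4 / D) * (∫ x, |f x| * ρ x) ^ (4 / D))) := by
        refine mul_le_mul_of_nonneg_left ?_ (by positivity)
        refine mul_le_mul ?_ s2 (by positivity) (by positivity)
        exact mul_le_mul_of_nonneg_left hJG_le (by positivity)
    _ = (κ ^ ((1:ℝ) + 2 / D) * κ * κ ^ ((4:ℝ) / D)) * c₀ ^ 2 *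
          (∫ x, ‖fderiv ℝ f x‖ ^ 2 * ρ x) * (∫ x, |f x| * ρ x) ^ (4 / D) := by ring
    _ = κ ^ ((2:ℝ) + 6 / D) * c₀ ^ 2 *
          (∫ x, ‖fderiv ℝ f x‖ ^ 2 * ρ x) * (∫ x, |f x| * ρ x) ^ (4 / D) := by rw [hκpow]
    _ ≤ κ ^ ((2:ℝ) + 6 / D) * (c₀ ^ 2 + 1) *
          (2 * ((1 / 2) * (∫ x, ‖fderiv ℝ f x‖ ^ 2 * ρ x) + ∫ x, f x ^ 2 * ρ x)) *
          (∫ x, |f x| * ρ x) ^ (4 / D) := by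
        refine mul_le_mul_of_nonneg_right ?_ (by positivity)
        refine mul_le_mul ?_ (by linarith) hIG_0 (by positivity)
        exact mul_le_mul_of_nonneg_left (by linarith) (by positivity)
    _ = 2 * (c₀ ^ 2 + 1) * κ ^ (2 + 6 / D) *
          ((1 / 2) * (∫ x, ‖fderiv ℝ f x‖ ^ 2 * ρ x) + ∫ x, f x ^ 2 * ρ x) *
          (∫ x, |f x| * ρ x) ^ (4 / D) := by ring
end
end
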